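/- Let E ∈ 𝓛 have arity n, and suppose 0 < ε < 1/4 and 1 ≤ ℓ ≤ n. Let A_0, …, A_{ℓ−1} ∈ M̂∖M be (ε,ℓ,E)-good sets, and let A_ℓ, …, A_{n−1} ∈ M. Then for any two injective functions β_0, β_1 : {0,…,ℓ−1} → {0,…,ℓ−1} and any permutation σ of {0,…,n−1}, Ê^{σ∘β_0}_ε(A_{σ(0)}, …, A_{σ(n−1)}) = Ê^{σ∘β_1}_ε(A_{σ(0)}, …, A_{σ(n−1)}) ∈ {⊤,⊥}. -/

import Mathlib

open scoped Classical

noncomputable section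

/-- Truth values: true, false, and indeterminate. -/
inductive TV where
  | top : TV
  | bot : TV
  | up  : TV
deriving DecidableEq

/-- A finite relational language. -/
structure RelLanguage where
  Symb : Type
  [fintypeSymb : Fintype Symb]
  arity : Symb → ℕ

attribute [instance] RelLanguage.fintypeSymb

/-- `q_𝓛`, the maximal arity of a relation symbol. -/
def RelLanguage.q (L : RelLanguage) : ℕ := Finset.univ.sup L.arity

/-- `n_𝓛 = |𝓛| ⬝ q_𝓛`. -/
def RelLanguage.nL (L : RelLanguage) : ℕ := Fintype.card L.Symb * L.q

/-- A structure for a finite relational language, on underlying set `M`. -/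
structure RelStructure (L : RelLanguage) (M : Type*) where
  rel : ∀ E : L.Symb, (Fin (L.arity E) → M) → Bool

/-- `M̂ = M ∪ 𝒫(M)`: an argument is either an element of `M` or a subset of `M`. -/
abbrev Arg (M : Type*) := M ⊕ Finset M

/-- Membership of an element in an argument: equality for elements, membership for sets. -/
def Arg.mem {M : Type*} (a : M) : Arg M → Prop
  | Sum.inl b => a = b
  | Sum.inr s => a ∈ s

/-- The size of an argument: `1` for an element, the cardinality for a set. -/
def Arg.size {M : Type*} : Arg M → ℕ
  | Sum.inl _ => 1
  | Sum.inr s => s.card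

variable {M : Type*} [Fintype M] [DecidableEq M]

/-- The ε-partial relation `Ê^m̄_ε`, where the list of indices is given in
*polling order*: the head of the list is the index polled first (outermost),
i.e. the list is the *reverse* of the tuple `m̄` of the paper. -/
def pollAux (ε : ℝ) {n : ℕ} (R : (Fin n → M) → Bool) :
    List (Fin n) → (Fin n → Arg M) → TV
  | [], A =>
      if h : ∃ f : Fin n → M, ∀ i, A i = Sum.inl (f i) then
        (if R (Classical.choose h) then TV.top else TV.bot)
      else TV.up
  | j :: rest, A =>
      match A j with
      | Sum.inl _ => TV.up
      | Sum.inr Aj =>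
          if (((Aj.filter fun a =>
                pollAux ε R rest (Function.update A j (Sum.inl a)) = TV.top).card : ℝ)
              > (1 - ε) * (Aj.card : ℝ)) then TV.top
          else if (((Aj.filter fun a =>
                pollAux ε R rest (Function.update A j (Sum.inl a)) = TV.bot).card : ℝ)
              > (1 - ε) * (Aj.card : ℝ)) then TV.bot
          else TV.up

/-- The ε-partial relation `Ê^m̄_ε`, with `m̄` given in the paper's order
(the *last* entry of `m̄` is the index polled first). -/
def partialRel (ε : ℝ) {n : ℕ} (R : (Fin n → M) → Bool)
    (mbar : List (Fin n)) (A : Fin n → Arg M) : TV :=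
  pollAux ε R mbar.reverse A

/-- The value `Ê^{⟨σ⁻¹(l-1),…,σ⁻¹(1),σ⁻¹(0)⟩}_ε (A_{σ(0)}, …, A_{σ(n-1)})`. -/
def pollValue (ε : ℝ) {n : ℕ} (R : (Fin n → M) → Bool) (l : ℕ)
    (σ : Equiv.Perm (Fin n)) (A : Fin n → Arg M) : TV :=
  pollAux ε R (((List.finRange n).take l).map σ.symm) fun i => A (σ i)

/-- `(ε, ℓ, E)`-goodness of an argument, for the relation `R` interpreting `E`. -/
def IsGood (ε : ℝ) {n : ℕ} (R : (Fin n → M) → Bool) : ℕ → Arg M → Prop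
  | 0, A₀ => A₀.isLeft = true
  | (m+1), A₀ =>
      (∀ k, 1 ≤ k → k < m + 1 → IsGood ε R k A₀) ∧
      (∀ (A : Fin n → Arg M) (σ : Equiv.Perm (Fin n)),
        (∀ i : Fin n, (i : ℕ) = 0 → A i = A₀) →
        (∀ i : Fin n, 1 ≤ (i : ℕ) → (i : ℕ) < m + 1 →
            (A i).isRight = true ∧ IsGood ε R (m + 1 - (i : ℕ)) (A i)) →
        (∀ i : Fin n, m + 1 ≤ (i : ℕ) → (A i).isLeft = true) →
        pollValue ε R (m + 1) σ A ≠ TV.up)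
  termination_by l _ => l
  decreasing_by all_goals omega

/-- `A` is ε-excellent: `(ε, arity(E), E)`-good for every relation symbol `E`. -/
def IsExcellent (ε : ℝ) {L : RelLanguage} (𝓜 : RelStructure L M) (A : Arg M) : Prop :=
  ∀ E : L.Symb, IsGood ε (𝓜.rel E) (L.arity E) A

/-- `P` is a partition of the finite set `S`. -/
def IsPartition {V : Type*} [DecidableEq V] (P : Finset (Finset V)) (S : Finset V) : Prop :=
  (∀ p ∈ P, p.Nonempty) ∧
  (∀ p ∈ P, ∀ q ∈ P, p ≠ q → Disjoint p q) ∧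
  (∀ x, x ∈ S ↔ ∃ p ∈ P, x ∈ p)

/-- A partition is equitable when any two parts differ in size by at most 1. -/
def IsEquitable {V : Type*} (P : Finset (Finset V)) : Prop :=
  ∀ p ∈ P, ∀ q ∈ P, p.card ≤ q.card + 1

/-- Indivisibility of a partition with respect to a single relation. -/
def IndivisibleRel {n : ℕ} (P : Finset (Finset M)) (R : (Fin n → M) → Bool) : Prop :=
  ∀ p : Fin n → Finset M, (∀ i, p i ∈ P) →
    ∀ a b : Fin n → M, (∀ i, a i ∈ p i) → (∀ i, b i ∈ p i) → R a = R b

/-- Indivisibility of a partition with respect to a structure. -/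
def Indivisible {L : RelLanguage} (P : Finset (Finset M)) (𝓝 : RelStructure L M) : Prop :=
  ∀ E : L.Symb, IndivisibleRel P (𝓝.rel E)

/-- The τ-branching property for an `n`-ary relation `R` with the variable partition
`(x_ℓ; the remaining variables)`. -/
def RelBranching {n : ℕ} (R : (Fin n → M) → Bool) (ℓ : Fin n) (τ : ℕ) : Prop :=
  ∃ (a : List Bool → M) (b : List Bool → (Fin n → M)),
    ∀ i : List Bool, i.length = τ →
      ∀ j : List Bool, j.length < τ → ∀ h : Bool,
        (j ++ [h]) <+: i → (R (Function.update (b j) ℓ (a i)) = h)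

/-- `𝓜` does not have the τ-branching property (for any relation symbol and
any singleton variable partition). -/
def NonBranching {L : RelLanguage} (𝓜 : RelStructure L M) (τ : ℕ) : Prop :=
  ∀ (E : L.Symb) (j : Fin (L.arity E)), ¬ RelBranching (𝓜.rel E) j τ

/-- `g = ⌈5 ⬝ n_𝓛 ⬝ τ̂ ⬝ log₂ τ̂⌉`. -/
def gBound (L : RelLanguage) (τ : ℕ) : ℕ :=
  ⌈5 * (L.nL : ℝ) * (τ : ℝ) * Real.logb 2 (τ : ℝ)⌉₊

/-- A staircase `⟨m_j⟩_{j ≤ k}`. -/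
def Staircase (ε : ℝ) (ms : ℕ → ℕ) (k : ℕ) : Prop :=
  (∀ j ≤ k, 0 < ms j) ∧ ∀ j < k, (ms (j + 1) : ℝ) ≤ ε * (ms j : ℝ)

end

/-!
Write a polling order as a list of distinct indices, outermost first. By goodness, every
order of the good sets yields a defined value: applying the goodness of the first polled set
to the permutation listing that order first says exactly this. Any two orders are related by
adjacent transpositions, so it suffices to see that swapping two adjacent indices `j`, `k`
preserves the value. If `j` then `k` yields `δ₁`, then more than a `(1 - ε)²` fraction of the
pairs `(b, c) ∈ A_j × A_k` gives `δ₁` to the remaining polling; likewise for `δ₂` in the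
other order. For `ε < 1/4` we have `(1 - ε)² > 1/2`, so the two sets of pairs meet and
`δ₁ = δ₂`.
-/

open Finset

section Counting

variable {α β : Type*} {s : Finset α} {t : Finset β}

theorem mul_mul_lt_sum_card_filter_of_lt_card_filter {p : α → β → Prop}
    [∀ a, DecidablePred (p a)] {r : ℝ} (hr : 0 ≤ r)
    (h : r * #s < #{a ∈ s | r * #t < #{b ∈ t | p a b}}) :
    r * #s * (r * #t) < ∑ a ∈ s, (#{b ∈ t | p a b} : ℝ) := by
  set G := {a ∈ s | r * #t < #{b ∈ t | p a b}}
  have hG : G.Nonempty := by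
    rw [← Finset.card_pos, ← Nat.cast_pos (α := ℝ)]
    exact lt_of_le_of_lt (by positivity) h
  calc r * #s * (r * #t) ≤ #G * (r * #t) := by gcongr
    _ = ∑ a ∈ G, r * #t := by rw [sum_const, nsmul_eq_mul]
    _ < ∑ a ∈ G, (#{b ∈ t | p a b} : ℝ) :=
        sum_lt_sum_of_nonempty hG fun a ha => (mem_filter.1 ha).2
    _ ≤ ∑ a ∈ s, (#{b ∈ t | p a b} : ℝ) :=
        sum_le_sum_of_subset_of_nonneg (filter_subset _ _) fun _ _ _ => by positivity

theorem sum_card_filter_eq_add_sum_card_filter_eq_le {γ : Type*} [DecidableEq γ]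
    (f : α → β → γ) {x y : γ} (hxy : x ≠ y) :
    ∑ a ∈ s, #{b ∈ t | f a b = x} + ∑ b ∈ t, #{a ∈ s | f a b = y} ≤ #s * #t := by
  have hswap : ∑ b ∈ t, #{a ∈ s | f a b = y} = ∑ a ∈ s, #{b ∈ t | f a b = y} := by
    simp only [card_filter]; exact sum_comm
  rw [hswap, ← sum_add_distrib, ← smul_eq_mul]
  refine sum_le_card_nsmul _ _ _ fun a _ => ?_
  calc #{b ∈ t | f a b = x} + #{b ∈ t | f a b = y}
      ≤ #{b ∈ t | f a b = x} + #{b ∈ t | ¬ f a b = x} := by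
        gcongr with b
        exact fun hy hx => hxy (hx.symm.trans hy)
    _ = #t := card_filter_add_card_filter_not _

end Counting

theorem List.Nodup.exists_perm_getElem {n : ℕ} {l : List (Fin n)} (hl : l.Nodup) :
    ∃ τ : Equiv.Perm (Fin n),
      (∀ (i : Fin n) (hi : (i : ℕ) < l.length), τ i = l[i]) ∧
      ∀ i : Fin n, l.length ≤ i → τ i ∉ l := by
  set L := l ++ (List.finRange n).filter (· ∉ l)
  have hL : L.Nodup := hl.append ((List.nodup_finRange n).filter _)
    fun x hx hx' => by simp_all
  have hmem : ∀ x, x ∈ L := fun x => by by_cases hx : x ∈ l <;> simp [L, hx]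
  let e := List.Nodup.getEquivOfForallMemList L hL hmem
  have hlen : L.length = n := by simpa using Fintype.card_congr e
  refine ⟨(finCongr hlen.symm).trans e, fun i hi => ?_, fun i hi => ?_⟩
  · simp [e, L, List.getElem_append_left hi]
  · have hi' : (i : ℕ) - l.length < ((List.finRange n).filter (· ∉ l)).length := by
      simp only [L, List.length_append] at hlen; omega
    have hnot := (List.mem_filter.1 (List.getElem_mem hi')).2
    simpa [e, L, List.getElem_append_right hi] using hnot

section Polling

variable {M : Type*} [Fintype M] [DecidableEq M] {n : ℕ} {ε : ℝ} {R : (Fin n → M) → Bool}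
  {j k : Fin n} {ℓ : ℕ} {l l' rest : List (Fin n)} {B : Fin n → Arg M} {δ : TV}

theorem pollAux_cons_majority (h : pollAux ε R (j :: rest) B = δ) (hδ : δ ≠ TV.up) :
    ∃ s, B j = Sum.inr s ∧
      (1 - ε) * #s < #{a ∈ s | pollAux ε R rest (Function.update B j (Sum.inl a)) = δ} := by
  rw [pollAux] at h
  rcases hB : B j with a | s
  · simp only [hB] at h
    exact absurd h.symm hδ
  · simp only [hB] at h
    refine ⟨s, rfl, ?_⟩
    split_ifs at h with htop hbot
    · exact h ▸ htop
    · exact h ▸ hbot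
    · exact absurd h.symm hδ

theorem pollAux_cons_cons_majority (hε : ε ≤ 1) (hjk : j ≠ k)
    (h : pollAux ε R (j :: k :: rest) B = δ) (hδ : δ ≠ TV.up) :
    ∃ s t, B j = Sum.inr s ∧ B k = Sum.inr t ∧
      (1 - ε) * #s * ((1 - ε) * #t) < ∑ b ∈ s, (#{c ∈ t | pollAux ε R rest
        (Function.update (Function.update B j (Sum.inl b)) k (Sum.inl c)) = δ} : ℝ) := by
  obtain ⟨s, hs, hmaj⟩ := pollAux_cons_majority h hδ
  obtain ⟨b, hb⟩ : {b ∈ s | pollAux ε R (k :: rest)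
      (Function.update B j (Sum.inl b)) = δ}.Nonempty := by
    rw [← Finset.card_pos, ← Nat.cast_pos (α := ℝ)]
    exact lt_of_le_of_lt (mul_nonneg (sub_nonneg.2 hε) (Nat.cast_nonneg _)) hmaj
  obtain ⟨t, ht, -⟩ := pollAux_cons_majority (mem_filter.1 hb).2 hδ
  rw [Function.update_of_ne hjk.symm] at ht
  refine ⟨s, t, hs, ht, mul_mul_lt_sum_card_filter_of_lt_card_filter (sub_nonneg.2 hε) ?_⟩
  refine hmaj.trans_le (Nat.cast_le.2 (card_le_card (monotone_filter_right _ fun b _ hb => ?_)))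
  obtain ⟨t', ht', hmaj'⟩ := pollAux_cons_majority hb hδ
  rw [Function.update_of_ne hjk.symm, ht, Sum.inr.injEq] at ht'
  exact ht' ▸ hmaj'

theorem pollAux_swap (hε : ε < 1 / 4) (hjk : j ≠ k)
    (h₁ : pollAux ε R (j :: k :: rest) B ≠ TV.up) (h₂ : pollAux ε R (k :: j :: rest) B ≠ TV.up) :
    pollAux ε R (j :: k :: rest) B = pollAux ε R (k :: j :: rest) B := by
  by_contra hne
  obtain ⟨s, t, hs, ht, hmaj₁⟩ := pollAux_cons_cons_majority (by linarith) hjk rfl h₁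
  obtain ⟨t', s', ht', hs', hmaj₂⟩ := pollAux_cons_cons_majority (by linarith) hjk.symm rfl h₂
  rw [hs, Sum.inr.injEq] at hs'
  rw [ht, Sum.inr.injEq] at ht'
  subst s' t'
  simp only [Function.update_comm hjk.symm] at hmaj₂
  have hcount := sum_card_filter_eq_add_sum_card_filter_eq_le (s := s) (t := t)
    (fun b c => pollAux ε R rest (Function.update (Function.update B j (Sum.inl b)) k (Sum.inl c)))
    hne
  have hcount' := (Nat.cast_le (α := ℝ)).2 hcount
  push_cast at hcount'
  have hhalf : 1 / 2 * (#s * #t : ℝ) ≤ (1 - ε) ^ 2 * (#s * #t) :=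
    mul_le_mul_of_nonneg_right (by nlinarith) (by positivity)
  linarith

theorem IsGood.mono {A : Arg M} {k : ℕ} (h : IsGood ε R ℓ A) (hk : 1 ≤ k) (hkℓ : k ≤ ℓ) :
    IsGood ε R k A := by
  obtain ⟨m, rfl⟩ : ∃ m, ℓ = m + 1 := ⟨ℓ - 1, by omega⟩
  rcases hkℓ.eq_or_lt with rfl | hlt
  · exact h
  · rw [IsGood] at h
    exact h.1 k hk hlt

structure GoodPolling (ε : ℝ) (R : (Fin n → M) → Bool) (ℓ : ℕ) (l : List (Fin n))
    (B : Fin n → Arg M) : Prop where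
  nodup : l.Nodup
  length_le : l.length ≤ ℓ
  isRight : ∀ j ∈ l, (B j).isRight
  isGood : ∀ j ∈ l, IsGood ε R ℓ (B j)
  isLeft : ∀ j ∉ l, (B j).isLeft

namespace GoodPolling

theorem perm (h : GoodPolling ε R ℓ l B) (hp : l.Perm l') : GoodPolling ε R ℓ l' B where
  nodup := hp.nodup_iff.1 h.nodup
  length_le := hp.length_eq ▸ h.length_le
  isRight j hj := h.isRight j (hp.mem_iff.2 hj)
  isGood j hj := h.isGood j (hp.mem_iff.2 hj)
  isLeft j hj := h.isLeft j (mt hp.mem_iff.1 hj)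

theorem update_cons (h : GoodPolling ε R ℓ (j :: l) B) (a : M) :
    GoodPolling ε R ℓ l (Function.update B j (Sum.inl a)) where
  nodup := (List.nodup_cons.1 h.nodup).2
  length_le := Nat.le_of_succ_le h.length_le
  isRight i hi := by
    have hij : i ≠ j := by rintro rfl; exact (List.nodup_cons.1 h.nodup).1 hi
    simpa [hij] using h.isRight i (List.mem_cons_of_mem j hi)
  isGood i hi := by
    have hij : i ≠ j := by rintro rfl; exact (List.nodup_cons.1 h.nodup).1 hi
    simpa [hij] using h.isGood i (List.mem_cons_of_mem j hi)
  isLeft i hi := by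
    by_cases hij : i = j
    · simp [hij]
    · simpa [hij] using h.isLeft i (by simp [hij, hi])

theorem pollAux_ne_up (h : GoodPolling ε R ℓ l B) : pollAux ε R l B ≠ TV.up := by
  rcases l with _ | ⟨j, t⟩
  · have hex : ∃ f : Fin n → M, ∀ i, B i = Sum.inl (f i) :=
      ⟨fun i => (B i).getLeft (h.isLeft i List.not_mem_nil),
        fun i => (Sum.inl_getLeft _ _).symm⟩
    rw [pollAux, dif_pos hex]
    split <;> simp
  obtain ⟨τ, hτl, hτr⟩ := h.nodup.exists_perm_getElem
  have hlen : t.length + 1 ≤ n := by simpa using h.nodup.length_le_card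
  have hlist : ((List.finRange n).take (t.length + 1)).map τ = j :: t :=
    List.ext_getElem (by simpa using hlen) fun i _ hi => by
      simpa using hτl ⟨i, by simp only [List.length_cons] at hi; omega⟩ hi
  have hgood : IsGood ε R (t.length + 1) (B j) :=
    (h.isGood j List.mem_cons_self).mono (by omega) h.length_le
  rw [IsGood] at hgood
  have key := hgood.2 (fun i => B (τ i)) τ.symm ?_ ?_ ?_
  · simpa [pollValue, hlist] using key
  · intro i hi
    rw [hτl i (by simp [hi])]
    simp [hi]
  · intro i hi₁ hi₂
    have hmem : τ i ∈ j :: t := hτl i hi₂ ▸ List.getElem_mem _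
    exact ⟨h.isRight _ hmem, (h.isGood _ hmem).mono (by omega) (by grind [h.length_le])⟩
  · exact fun i hi => h.isLeft _ (hτr i hi)

theorem pollAux_perm (hε : ε < 1 / 4) (h : GoodPolling ε R ℓ l B) (hp : l.Perm l') :
    pollAux ε R l B = pollAux ε R l' B := by
  induction hp generalizing B with
  | nil => rfl
  | cons j _ ih =>
    have inner := fun a => ih (h.update_cons a)
    simp only [pollAux, inner]
  | swap j k t =>
    have hkj : k ≠ j := by rintro rfl; exact absurd h.nodup (by simp)
    exact pollAux_swap hε hkj h.pollAux_ne_up (h.perm (.swap j k t)).pollAux_ne_up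
  | trans p₁ _ ih₁ ih₂ => exact (ih₁ h).trans (ih₂ (h.perm p₁))

end GoodPolling

end Polling

theorem mem_map_finRange_castLE_iff {n ℓ : ℕ} {β : Fin ℓ → Fin ℓ} (hβ : Function.Injective β)
    (hℓn : ℓ ≤ n) (σ : Equiv.Perm (Fin n)) (i : Fin n) :
    i ∈ (List.finRange ℓ).map (fun t => σ.symm (Fin.castLE hℓn (β t))) ↔ (σ i : ℕ) < ℓ := by
  simp only [List.mem_map, List.mem_finRange, true_and, Equiv.symm_apply_eq]
  constructor
  · rintro ⟨t, ht⟩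
    simp [← ht]
  · intro hi
    obtain ⟨t, ht⟩ := Finite.surjective_of_injective hβ ⟨σ i, hi⟩
    exact ⟨t, by simp [ht]⟩

theorem goodPolling_reverse_map_finRange_castLE {M : Type*} [Fintype M] [DecidableEq M]
    {n ℓ : ℕ} {ε : ℝ} {R : (Fin n → M) → Bool} {β : Fin ℓ → Fin ℓ} (hβ : Function.Injective β)
    (hℓn : ℓ ≤ n) (σ : Equiv.Perm (Fin n)) {A : Fin n → Arg M}
    (hsets : ∀ i : Fin n, (i : ℕ) < ℓ → (A i).isRight = true ∧ IsGood ε R ℓ (A i))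
    (helems : ∀ i : Fin n, ℓ ≤ (i : ℕ) → (A i).isLeft = true) :
    GoodPolling ε R ℓ ((List.finRange ℓ).map fun t => σ.symm (Fin.castLE hℓn (β t))).reverse
      (fun i => A (σ i)) where
  nodup := List.nodup_reverse.2 <| (List.nodup_finRange ℓ).map
    fun _ _ h => hβ (Fin.castLE_injective hℓn (σ.symm.injective h))
  length_le := by simp
  isRight j hj :=
    (hsets (σ j) ((mem_map_finRange_castLE_iff hβ hℓn σ j).1 (List.mem_reverse.1 hj))).1
  isGood j hj :=
    (hsets (σ j) ((mem_map_finRange_castLE_iff hβ hℓn σ j).1 (List.mem_reverse.1 hj))).2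
  isLeft j hj := helems (σ j) <| not_lt.1 fun h =>
    hj (List.mem_reverse.2 ((mem_map_finRange_castLE_iff hβ hℓn σ j).2 h))

theorem statement0_general {L : RelLanguage} {M : Type} [Fintype M] [DecidableEq M]
    (𝓜 : RelStructure L M) (E : L.Symb)
    (ε : ℝ) (hε : ε < 1 / 4)
    (ℓ : ℕ) (hℓn : ℓ ≤ L.arity E)
    (A : Fin (L.arity E) → Arg M)
    (hsets : ∀ i : Fin (L.arity E), (i : ℕ) < ℓ →
        (A i).isRight = true ∧ IsGood ε (𝓜.rel E) ℓ (A i))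
    (helems : ∀ i : Fin (L.arity E), ℓ ≤ (i : ℕ) → (A i).isLeft = true)
    (β₀ β₁ : Fin ℓ → Fin ℓ) (hβ₀ : Function.Injective β₀) (hβ₁ : Function.Injective β₁)
    (σ : Equiv.Perm (Fin (L.arity E))) :
    partialRel ε (𝓜.rel E)
        ((List.finRange ℓ).map fun t => σ.symm (Fin.castLE hℓn (β₀ t)))
        (fun i => A (σ i)) =
      partialRel ε (𝓜.rel E)
        ((List.finRange ℓ).map fun t => σ.symm (Fin.castLE hℓn (β₁ t)))
        (fun i => A (σ i)) ∧
    partialRel ε (𝓜.rel E)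
        ((List.finRange ℓ).map fun t => σ.symm (Fin.castLE hℓn (β₀ t)))
        (fun i => A (σ i)) ≠ TV.up := by
  have h₀ := goodPolling_reverse_map_finRange_castLE hβ₀ hℓn σ hsets helems
  have h₁ := goodPolling_reverse_map_finRange_castLE hβ₁ hℓn σ hsets helems
  have hperm := (List.perm_ext_iff_of_nodup h₀.nodup h₁.nodup).2 fun i => by
    simp only [List.mem_reverse, mem_map_finRange_castLE_iff hβ₀, mem_map_finRange_castLE_iff hβ₁]
  exact ⟨h₀.pollAux_perm hε hperm, h₀.pollAux_ne_up⟩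

/-- Proposition: the order of unraveling does not matter.
If `A_0, …, A_{ℓ-1}` are `(ε,ℓ,E)`-good sets and `A_ℓ, …, A_{n-1}` are elements, then
for any injections `β₀ β₁ : {0,…,ℓ-1} → {0,…,ℓ-1}` and any permutation `σ` of `{0,…,n-1}`,
`Ê^{σ∘β₀}_ε (A_{σ(0)},…,A_{σ(n-1)}) = Ê^{σ∘β₁}_ε (A_{σ(0)},…,A_{σ(n-1)}) ∈ {⊤,⊥}`. -/
theorem statement0 {L : RelLanguage} {M : Type} [Fintype M] [DecidableEq M]
    (𝓜 : RelStructure L M) (E : L.Symb)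
    (ε : ℝ) (hε0 : 0 < ε) (hε : ε < 1 / 4)
    (ℓ : ℕ) (hℓ1 : 1 ≤ ℓ) (hℓn : ℓ ≤ L.arity E)
    (A : Fin (L.arity E) → Arg M)
    (hsets : ∀ i : Fin (L.arity E), (i : ℕ) < ℓ →
        (A i).isRight = true ∧ IsGood ε (𝓜.rel E) ℓ (A i))
    (helems : ∀ i : Fin (L.arity E), ℓ ≤ (i : ℕ) → (A i).isLeft = true)
    (β₀ β₁ : Fin ℓ → Fin ℓ) (hβ₀ : Function.Injective β₀) (hβ₁ : Function.Injective β₁)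
    (σ : Equiv.Perm (Fin (L.arity E))) :
    partialRel ε (𝓜.rel E)
        ((List.finRange ℓ).map fun t => σ.symm (Fin.castLE hℓn (β₀ t)))
        (fun i => A (σ i)) =
      partialRel ε (𝓜.rel E)
        ((List.finRange ℓ).map fun t => σ.symm (Fin.castLE hℓn (β₁ t)))
        (fun i => A (σ i)) ∧
    partialRel ε (𝓜.rel E)
        ((List.finRange ℓ).map fun t => σ.symm (Fin.castLE hℓn (β₀ t)))
        (fun i => A (σ i)) ≠ TV.up :=
  statement0_general 𝓜 E ε hε ℓ hℓn A hsets helems β₀ β₁ hβ₀ hβ₁ σ
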